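/- arXiv:2310.09954 — 3 statements merged into one kernel-verified Lean document; each statement's English description precedes it below -/
import Mathlib

section
/- Let g, r, d, s, e be positive integers with d ≤ g − 1, e ≤ g − 1, and ρ(g,r,d) = ρ(g,s,e) < 0. If g + 1 ≤ ⌊d/r⌋ + d, g + 1 ≤ ⌊e/s⌋ + e, and γ(r,d) < γ(s,e), then κ(g,r,d) > κ(g,s,e). -/
noncomputable section

/-- The Brill--Noether number `ρ(g,r,d) = g - (r+1)(g-d+r)`. -/
def rho (g r d : ℤ) : ℤ := g - (r + 1) * (g - d + r)

/-- Pflueger's Brill--Noether number `ρ_k(g,r,d)`, the maximum of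
`ρ(g,r-ℓ,d) - ℓk` over integers `0 ≤ ℓ ≤ min r (g-d+r-1)`. -/
def rhoK (g r d k : ℤ) : ℤ :=
  sSup ((fun ℓ : ℤ => rho g (r - ℓ) d - ℓ * k) '' Set.Icc 0 (min r (g - d + r - 1)))

/-- `κ(g,r,d)`: the greatest integer `k ≥ 1` such that `ρ_k(g,r,d) ≥ 0`. -/
def kappa (g r d : ℤ) : ℤ := sSup {k : ℤ | 1 ≤ k ∧ 0 ≤ rhoK g r d k}

/-- `d_max(g,r) = r + ⌈gr/(r+1)⌉ - 1`, the largest `d` with `ρ(g,r,d) < 0`. -/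
def dmax (g r : ℤ) : ℤ := r + ⌈((g : ℚ) * r) / ((r : ℚ) + 1)⌉ - 1

/-!
Write `ρ = ρ(g,r,d)` and `M = g - d + 2r + 1`. Since `ρ(g,r-ℓ,d) = ρ + ℓ(M - ℓ)`, for `ρ < 0` we get
`ρ_k(g,r,d) ≥ 0` iff `k ≤ M + ⌊ρ/ℓ⌋ - ℓ` for some `1 ≤ ℓ ≤ r`. The hypothesis `g + 1 ≤ ⌊d/r⌋ + d`
gives `ρ ≥ -r(r+1)`, which makes `ℓ ↦ ⌊ρ/ℓ⌋ - ℓ` nonincreasing for `ℓ ≥ r`; so a witness `ℓ` for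
`(s,e)` can be truncated to `min ℓ r` for `(r,d)`, while `γ(r,d) < γ(s,e)` says exactly that
`M` for `(r,d)` exceeds `M` for `(s,e)`. Hence `k ↦ k + 1` maps the `κ`-set of `(s,e)` into that
of `(r,d)`.
-/

lemma rho_sub (g r d ℓ : ℤ) : rho g (r - ℓ) d = rho g r d + ℓ * (g - d + 2 * r + 1 - ℓ) := by
  unfold rho; ring

lemma nonneg_rhoK_iff {g r d : ℤ} (k : ℤ) (hr : 0 ≤ r) (hdg : d ≤ g - 1) :
    0 ≤ rhoK g r d k ↔ ∃ ℓ ∈ Set.Icc 0 r, 0 ≤ rho g (r - ℓ) d - ℓ * k := by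
  have hmin : min r (g - d + r - 1) = r := min_eq_left (by omega)
  unfold rhoK
  rw [hmin]
  set S := (fun ℓ : ℤ => rho g (r - ℓ) d - ℓ * k) '' Set.Icc 0 r
  have hS : S.Finite := (Set.finite_Icc 0 r).image _
  constructor
  · intro h
    obtain ⟨ℓ, hℓ, hval⟩ := (Set.nonempty_Icc.mpr hr).image _ |>.csSup_mem hS
    exact ⟨ℓ, hℓ, h.trans_eq hval.symm⟩
  · rintro ⟨ℓ, hℓ, h⟩
    exact h.trans (le_csSup hS.bddAbove ⟨ℓ, hℓ, rfl⟩)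

lemma nonneg_rhoK_iff_of_rho_neg {g r d : ℤ} (k : ℤ) (hr : 0 ≤ r) (hdg : d ≤ g - 1)
    (hneg : rho g r d < 0) :
    0 ≤ rhoK g r d k ↔
      ∃ ℓ ∈ Set.Icc 1 r, k ≤ g - d + 2 * r + 1 + (rho g r d / ℓ - ℓ) := by
  rw [nonneg_rhoK_iff k hr hdg]
  refine exists_congr fun ℓ => ⟨fun ⟨⟨hℓ0, hℓr⟩, h⟩ => ?_, fun ⟨⟨hℓ1, hℓr⟩, h⟩ => ?_⟩
  · rw [rho_sub] at h
    have hℓ1 : 1 ≤ ℓ := by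
      by_contra! hℓ
      obtain rfl : ℓ = 0 := by omega
      simp only [zero_mul, add_zero, sub_zero] at h
      omega
    have : (k - (g - d + 2 * r + 1) + ℓ) * ℓ ≤ rho g r d := by linarith
    have := (Int.le_ediv_iff_mul_le (by omega)).mpr this
    exact ⟨⟨hℓ1, hℓr⟩, by omega⟩
  · have := (Int.le_ediv_iff_mul_le (by omega)).mp
      (show k - (g - d + 2 * r + 1) + ℓ ≤ rho g r d / ℓ by omega)
    refine ⟨⟨by omega, hℓr⟩, ?_⟩
    rw [rho_sub]
    linarith

lemma Int.ediv_sub_le_ediv_sub {a b ℓ : ℤ} (ha : 0 < a) (haℓ : a ≤ ℓ) (hb : -(a * (a + 1)) ≤ b) :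
    b / ℓ - ℓ ≤ b / a - a := by
  have hq : -(a + 1) ≤ b / a := (Int.le_ediv_iff_mul_le ha).mpr (by linarith)
  have hlt : b < a * (b / a) + a := Int.lt_mul_ediv_self_add ha
  have : b / ℓ < b / a + ℓ - a + 1 := by
    rw [Int.ediv_lt_iff_lt_mul (by omega)]
    -- `(q + 1 + ℓ - a) ℓ - a (q + 1) = (ℓ - a)(q + 1 + ℓ)` for `q = b / a`, and `q + 1 + ℓ ≥ ℓ - a ≥ 0`
    nlinarith [mul_nonneg (sub_nonneg.mpr haℓ) (show 0 ≤ b / a + 1 + ℓ by omega)]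
  omega

lemma neg_mul_add_one_le_rho {g r d : ℤ} (hr : 0 < r) (h : g + 1 ≤ d / r + d) :
    -(r * (r + 1)) ≤ rho g r d := by
  have : (g + 1 - d) * r ≤ d := (Int.le_ediv_iff_mul_le hr).mp (by omega)
  unfold rho
  nlinarith

lemma rhoK_one_nonneg {g s e : ℤ} (hs : 0 ≤ s) (hse : s ≤ e) (heg : e ≤ g - 1) :
    0 ≤ rhoK g s e 1 :=
  (nonneg_rhoK_iff 1 hs heg).mpr ⟨s, ⟨hs, le_rfl⟩, by unfold rho; linarith⟩

lemma bddAbove_kappa_set {g r d : ℤ} (hr : 0 ≤ r) (hdg : d ≤ g - 1) (hneg : rho g r d < 0) :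
    BddAbove {k : ℤ | 1 ≤ k ∧ 0 ≤ rhoK g r d k} := by
  refine ⟨g - d + 2 * r + 1, fun k ⟨_, hk⟩ => ?_⟩
  obtain ⟨ℓ, ⟨hℓ1, _⟩, hkℓ⟩ := (nonneg_rhoK_iff_of_rho_neg k hr hdg hneg).mp hk
  have := Int.ediv_nonpos_of_nonpos_of_neg hneg.le (by omega : 0 < ℓ)
  omega

lemma rhoK_add_one_nonneg {g r d s e k : ℤ} (hr : 1 ≤ r) (hs : 0 ≤ s)
    (hdg : d ≤ g - 1) (heg : e ≤ g - 1) (hrr : rho g r d = rho g s e) (hneg : rho g r d < 0)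
    (hρ : -(r * (r + 1)) ≤ rho g r d) (hγ : d - 2 * r < e - 2 * s)
    (hk : 0 ≤ rhoK g s e k) : 0 ≤ rhoK g r d (k + 1) := by
  obtain ⟨ℓ, ⟨hℓ1, hℓs⟩, hkℓ⟩ := (nonneg_rhoK_iff_of_rho_neg k hs heg (hrr ▸ hneg)).mp hk
  rw [← hrr] at hkℓ
  refine (nonneg_rhoK_iff_of_rho_neg (k + 1) (by omega) hdg hneg).mpr
    ⟨min ℓ r, ⟨le_min hℓ1 hr, min_le_right ℓ r⟩, ?_⟩
  have hmono : rho g r d / ℓ - ℓ ≤ rho g r d / min ℓ r - min ℓ r := by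
    rcases le_total ℓ r with h | h
    · rw [min_eq_left h]
    · rw [min_eq_right h]
      exact Int.ediv_sub_le_ediv_sub (by omega) h hρ
  omega

lemma Int.csSup_lt_csSup_of_forall_add_one_mem {A B : Set ℤ} (hA : A.Nonempty) (hB : BddAbove B)
    (h : ∀ k ∈ A, k + 1 ∈ B) : sSup A < sSup B := by
  have : sSup A ≤ sSup B - 1 :=
    csSup_le hA fun k hk => le_sub_iff_add_le.mpr (le_csSup hB (h k hk))
  omega

theorem stmt5_general (g r d s e : ℤ) (hr : 1 ≤ r)
    (hs : 1 ≤ s) (hdg : d ≤ g - 1) (heg : e ≤ g - 1)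
    (hrr : rho g r d = rho g s e) (hneg : rho g r d < 0)
    (h1 : g + 1 ≤ d / r + d) (h2 : g + 1 ≤ e / s + e)
    (h3 : d - 2 * r < e - 2 * s) :
    kappa g s e < kappa g r d := by
  have hρ : -(r * (r + 1)) ≤ rho g r d := neg_mul_add_one_le_rho hr h1
  have hse : s ≤ e := by simpa using (Int.le_ediv_iff_mul_le hs).mp (by omega : 1 ≤ e / s)
  refine Int.csSup_lt_csSup_of_forall_add_one_mem ⟨1, le_rfl, rhoK_one_nonneg (by omega) hse heg⟩
    (bddAbove_kappa_set (by omega) hdg hneg) fun k ⟨hk1, hk⟩ => ⟨by omega, ?_⟩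
  exact rhoK_add_one_nonneg hr (by omega) hdg heg hrr hneg hρ h3 hk

theorem stmt5 (g r d s e : ℤ) (hg : 1 ≤ g) (hr : 1 ≤ r) (hd : 1 ≤ d)
    (hs : 1 ≤ s) (he : 1 ≤ e) (hdg : d ≤ g - 1) (heg : e ≤ g - 1)
    (hrr : rho g r d = rho g s e) (hneg : rho g r d < 0)
    (h1 : g + 1 ≤ d / r + d) (h2 : g + 1 ≤ e / s + e)
    (h3 : d - 2 * r < e - 2 * s) :
    kappa g s e < kappa g r d :=
  stmt5_general g r d s e hr hs hdg heg hrr hneg h1 h2 h3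
end
end

section
/- Let g, r ≥ 1 be integers with g ≥ r(r+1) (equivalently d_max(g,r) ≤ g − 1), and set d = d_max(g,r). Then (i) κ(g,r,d) ≤ g/(r+1) + r and (ii) κ(g,r,d) > g/(r+1) + r − 2√(r+1), where the inequalities are between real numbers. -/
/-!
Write `g = (r+1)m + s` with `0 ≤ s ≤ r`. Then `d_max = g + r - 1 - m`, and
`ρ(g, r-ℓ, d_max) - ℓk = ℓ(m+r+2-k) - ℓ² - (r+1-s)`, so `ρ_k ≥ 0` exactly when some
`0 ≤ ℓ ≤ r` has `ℓ² + (r+1-s) ≤ ℓ(m+r+2-k)`. As `r+1-s ≥ 1`, this forces `k ≤ m + r`,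
which gives (i). For (ii) take `j = ⌊√(r-s)⌋` and `ℓ = j+1`: then `k = m + r - 2j` is
admissible, and `m + r - 2j` beats `g/(r+1) + r - 2√(r+1)` because
`2(r+1)(√(r+1) - j) ≥ (√(r+1) + j)(√(r+1) - j) ≥ s + 1`.
-/

noncomputable section

theorem div_lt_two_mul_sqrt_sub {n s x : ℝ} (hn : 1 ≤ n) (hs : 0 ≤ s) (hx : 0 ≤ x)
    (hxs : x ^ 2 ≤ n - 1 - s) : s / n < 2 * (Real.sqrt n - x) := by
  have ha := Real.sq_sqrt (zero_le_one.trans hn)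
  have ha₁ : 1 ≤ Real.sqrt n := Real.one_le_sqrt.mpr hn
  have hxa : x < Real.sqrt n := by nlinarith
  have hsum : Real.sqrt n + x ≤ 2 * n := by nlinarith
  have hprod : s + 1 ≤ (Real.sqrt n - x) * (Real.sqrt n + x) := by nlinarith
  rw [div_lt_iff₀ (by linarith)]
  nlinarith [mul_le_mul_of_nonneg_left hsum (sub_nonneg.mpr hxa.le)]

theorem Int.sqrt_mul_self_le {n : ℤ} (hn : 0 ≤ n) : Int.sqrt n * Int.sqrt n ≤ n := by
  lift n to ℕ using hn
  rw [Int.sqrt_natCast]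
  exact_mod_cast Nat.sqrt_le n

theorem Int.lt_succ_sqrt_mul_self (n : ℤ) : n < (Int.sqrt n + 1) * (Int.sqrt n + 1) := by
  rcases lt_or_ge n 0 with hn | hn
  · nlinarith [Int.sqrt_nonneg n]
  lift n to ℕ using hn
  rw [Int.sqrt_natCast]
  exact_mod_cast Nat.lt_succ_sqrt n

section Kappa

variable {g r d : ℤ}

theorem rhoK_nonneg_iff {k : ℤ} (h : 0 ≤ min r (g - d + r - 1)) :
    0 ≤ rhoK g r d k ↔
      ∃ ℓ ∈ Set.Icc 0 (min r (g - d + r - 1)), 0 ≤ rho g (r - ℓ) d - ℓ * k := by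
  rw [rhoK, ← not_lt, ((Set.finite_Icc _ _).image _).csSup_lt_iff
    ((Set.nonempty_Icc.mpr h).image _)]
  simp only [Set.forall_mem_image, not_forall, not_lt, exists_prop]

theorem kappa_le {B : ℤ} (hne : ∃ k, 1 ≤ k ∧ 0 ≤ rhoK g r d k)
    (hB : ∀ k, 0 ≤ rhoK g r d k → k ≤ B) : kappa g r d ≤ B :=
  csSup_le hne fun k hk => hB k hk.2

theorem le_kappa {B k : ℤ} (hB : ∀ k, 0 ≤ rhoK g r d k → k ≤ B) (hk₁ : 1 ≤ k)
    (hk : 0 ≤ rhoK g r d k) : k ≤ kappa g r d :=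
  le_csSup ⟨B, fun k hk => hB k hk.2⟩ ⟨hk₁, hk⟩

end Kappa

section Dmax

variable {g r : ℤ}

theorem dmax_eq (hr : 0 ≤ r) : dmax g r = g + r - 1 - g / (r + 1) := by
  obtain ⟨n, hn⟩ : ∃ n : ℕ, r + 1 = n := ⟨(r + 1).toNat, by omega⟩
  have hnq : (r : ℚ) + 1 = n := by exact_mod_cast hn
  have hn0 : (n : ℚ) ≠ 0 := by rw [← hnq]; positivity
  have hq : (g : ℚ) * r / n = g + -((g : ℚ) / n) := by
    field_simp
    linear_combination (g : ℚ) * hnq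
  rw [dmax, hnq, hq, Int.ceil_intCast_add, Int.ceil_neg, Rat.floor_intCast_div_natCast, hn]
  ring

theorem rho_dmax_sub_mul (hr : 0 ≤ r) (ℓ k : ℤ) :
    rho g (r - ℓ) (dmax g r) - ℓ * k =
      ℓ * (g / (r + 1) + r + 2 - k) - ℓ ^ 2 - (r + 1 - g % (r + 1)) := by
  have hg := Int.emod_add_mul_ediv g (r + 1)
  rw [rho, dmax_eq hr]
  linear_combination -hg

theorem rhoK_dmax_nonneg_iff (hr : 0 ≤ r) (h : r * (r + 1) ≤ g) {k : ℤ} :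
    0 ≤ rhoK g r (dmax g r) k ↔
      ∃ ℓ ∈ Set.Icc 0 r, ℓ ^ 2 + (r + 1 - g % (r + 1)) ≤ ℓ * (g / (r + 1) + r + 2 - k) := by
  have hm : r ≤ g / (r + 1) := (Int.le_ediv_iff_mul_le (by omega)).mpr h
  have hmin : min r (g - dmax g r + r - 1) = r := by
    rw [dmax_eq hr]
    exact min_eq_left (by omega)
  rw [rhoK_nonneg_iff (by omega), hmin]
  refine exists_congr fun ℓ => and_congr_right fun _ => ?_
  rw [rho_dmax_sub_mul hr]
  constructor <;> intro <;> linarith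

theorem le_of_rhoK_dmax_nonneg (hr : 0 ≤ r) (h : r * (r + 1) ≤ g) {k : ℤ}
    (hk : 0 ≤ rhoK g r (dmax g r) k) : k ≤ g / (r + 1) + r := by
  obtain ⟨ℓ, hℓ, hineq⟩ := (rhoK_dmax_nonneg_iff hr h).mp hk
  have hs : g % (r + 1) < r + 1 := Int.emod_lt_of_pos g (by omega)
  nlinarith [hℓ.1]

theorem exists_rhoK_dmax_nonneg (hr : 1 ≤ r) (h : r * (r + 1) ≤ g) {j : ℤ} (hj₀ : 0 ≤ j)
    (hj : j * j ≤ r - g % (r + 1)) (hj' : r - g % (r + 1) < (j + 1) * (j + 1)) :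
    ∃ k, g / (r + 1) + r - 2 * j ≤ k ∧ 1 ≤ k ∧ 0 ≤ rhoK g r (dmax g r) k := by
  have hm : r ≤ g / (r + 1) := (Int.le_ediv_iff_mul_le (by omega)).mpr h
  have hs : 0 ≤ g % (r + 1) := Int.emod_nonneg g (by omega)
  by_cases hjr : j < r
  · refine ⟨g / (r + 1) + r - 2 * j, le_rfl, by omega, ?_⟩
    refine (rhoK_dmax_nonneg_iff (by omega) h).mpr ⟨j + 1, ⟨by omega, by omega⟩, ?_⟩
    nlinarith
  · -- `ℓ = j + 1` is out of range only for `r = j = 1` and `g` even, where `ℓ = 1` gives `k = m`.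
    have hr1 : r = 1 := by nlinarith
    subst hr1
    have hj1 : j = 1 := by nlinarith
    subst hj1
    refine ⟨g / (1 + 1), by omega, by omega, ?_⟩
    refine (rhoK_dmax_nonneg_iff (by omega) h).mpr ⟨1, ⟨by omega, le_rfl⟩, ?_⟩
    omega

end Dmax

theorem stmt10_general (g r : ℤ) (hr : 1 ≤ r) (h : r * (r + 1) ≤ g) :
    (kappa g r (dmax g r) : ℝ) ≤ (g : ℝ) / ((r : ℝ) + 1) + (r : ℝ) ∧
    (g : ℝ) / ((r : ℝ) + 1) + (r : ℝ) - 2 * Real.sqrt ((r : ℝ) + 1) <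
      (kappa g r (dmax g r) : ℝ) := by
  set m := g / (r + 1)
  set s := g % (r + 1)
  set j := Int.sqrt (r - s)
  have hs₀ : 0 ≤ s := Int.emod_nonneg g (by omega)
  have hs : s < r + 1 := Int.emod_lt_of_pos g (by omega)
  have hj : j * j ≤ r - s := Int.sqrt_mul_self_le (by omega)
  obtain ⟨k, hkj, hk₁, hk⟩ :=
    exists_rhoK_dmax_nonneg hr h (Int.sqrt_nonneg _) hj (Int.lt_succ_sqrt_mul_self _)
  have hB : ∀ k, 0 ≤ rhoK g r (dmax g r) k → k ≤ m + r :=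
    fun _ => le_of_rhoK_dmax_nonneg (by omega) h
  have hupper : kappa g r (dmax g r) ≤ m + r := kappa_le ⟨k, hk₁, hk⟩ hB
  have hlower : m + r - 2 * j ≤ kappa g r (dmax g r) := hkj.trans (le_kappa hB hk₁ hk)
  have hg : (g : ℝ) / (r + 1) = m + s / (r + 1) := by
    have hdiv : (g : ℝ) = s + (r + 1) * m := by
      exact_mod_cast (Int.emod_add_mul_ediv g (r + 1)).symm
    have hr₀ : (r : ℝ) + 1 ≠ 0 := by positivity
    rw [hdiv, add_div, mul_div_cancel_left₀ _ hr₀, add_comm]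
  have hj' : (j : ℝ) ^ 2 ≤ (r + 1) - 1 - s := by
    rw [add_sub_cancel_right]
    exact_mod_cast (by linarith : j ^ 2 ≤ r - s)
  have hgap : (s : ℝ) / (r + 1) < 2 * (Real.sqrt (r + 1) - j) :=
    div_lt_two_mul_sqrt_sub (by exact_mod_cast (by omega : 1 ≤ r + 1)) (by exact_mod_cast hs₀)
      (by exact_mod_cast Int.sqrt_nonneg _) hj'
  have hs' : 0 ≤ (s : ℝ) / (r + 1) := by positivity
  have hupper' : (kappa g r (dmax g r) : ℝ) ≤ m + r := by exact_mod_cast hupper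
  have hlower' : (m : ℝ) + r - 2 * j ≤ kappa g r (dmax g r) := by exact_mod_cast hlower
  constructor <;> linarith

theorem stmt10 (g r : ℤ) (hg : 1 ≤ g) (hr : 1 ≤ r) (h : r * (r + 1) ≤ g) :
    (kappa g r (dmax g r) : ℝ) ≤ (g : ℝ) / ((r : ℝ) + 1) + (r : ℝ) ∧
    (g : ℝ) / ((r : ℝ) + 1) + (r : ℝ) - 2 * Real.sqrt ((r : ℝ) + 1) <
      (kappa g r (dmax g r) : ℝ) :=
  stmt10_general g r hr h
end
end

section
/- For every integer α ≥ 3, one has κ(2α² + α − 2, α − 1, 2α² − 4) = 3α − 2 and κ(2α² + α − 2, α, 2α² − 1) = 3α − 2. In particular, these two values of κ are equal. -/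
noncomputable section

/-! `ρ(g, r-ℓ, d) - ℓk = ρ(g,r,d) + ℓ(s - k - ℓ)` with `s = r + 1 + (g-d+r)`, a concave quadratic in `ℓ`;
so `ρ_k` is antitone in `k`, its value at `ℓ = 1` bounds it below and the vertex of the parabola
bounds it above. For the two triples of the theorem, `ρ = -2, s = 3α+1` and `ρ = -1, s = 3α`, and
these bounds already pin `κ` down to `3α - 2`. -/

lemma rho_sub_eq (g r d ℓ : ℤ) :
    rho g (r - ℓ) d = rho g r d + ℓ * (r + 1 + (g - d + r) - ℓ) := by
  unfold rho; ring

lemma le_rhoK {g r d ℓ : ℤ} (k : ℤ) (hℓ : ℓ ∈ Set.Icc 0 (min r (g - d + r - 1))) :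
    rho g (r - ℓ) d - ℓ * k ≤ rhoK g r d k :=
  le_csSup ((Set.finite_Icc _ _).image _).bddAbove ⟨ℓ, hℓ, rfl⟩

lemma rhoK_antitone (g r d : ℤ) : Antitone (rhoK g r d) := by
  intro k k' hk
  rcases (Set.Icc (0 : ℤ) (min r (g - d + r - 1))).eq_empty_or_nonempty with hI | ⟨ℓ, hℓ⟩
  · simp only [rhoK, hI, Set.image_empty, le_refl]
  · refine csSup_le ⟨_, ℓ, hℓ, rfl⟩ ?_
    rintro _ ⟨ℓ', hℓ', rfl⟩
    exact (sub_le_sub_left (mul_le_mul_of_nonneg_left hk hℓ'.1) _).trans (le_rhoK k hℓ')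

lemma four_mul_rhoK_le {g r d : ℤ} (k : ℤ) (hI : 0 ≤ min r (g - d + r - 1)) :
    4 * rhoK g r d k ≤ 4 * rho g r d + (r + 1 + (g - d + r) - k) ^ 2 := by
  obtain ⟨ℓ, -, hℓ⟩ : rhoK g r d k ∈ _ :=
    Int.csSup_mem ⟨_, 0, ⟨le_rfl, hI⟩, rfl⟩ ((Set.finite_Icc _ _).image _).bddAbove
  rw [← hℓ]
  dsimp only
  rw [rho_sub_eq]
  nlinarith [sq_nonneg (r + 1 + (g - d + r) - k - 2 * ℓ)]

lemma kappa_eq_of_rhoK {g r d K : ℤ} (hK : 1 ≤ K) (h₀ : 0 ≤ rhoK g r d K)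
    (h₁ : rhoK g r d (K + 1) < 0) : kappa g r d = K := by
  have hub : ∀ k ∈ {k : ℤ | 1 ≤ k ∧ 0 ≤ rhoK g r d k}, k ≤ K := fun k ⟨_, hk⟩ ↦
    not_lt.1 fun hlt ↦ (h₁.trans_le' (rhoK_antitone g r d hlt)).not_ge hk
  exact le_antisymm (csSup_le ⟨K, hK, h₀⟩ hub) (le_csSup ⟨K, hub⟩ ⟨hK, h₀⟩)

lemma kappa_eq_of_rho_add {g r d K : ℤ} (hK : 1 ≤ K) (hI : 1 ≤ min r (g - d + r - 1))
    (h₀ : 0 ≤ rho g r d + (r + (g - d + r) - K))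
    (h₁ : 4 * rho g r d + (r + (g - d + r) - K) ^ 2 < 0) : kappa g r d = K := by
  refine kappa_eq_of_rhoK hK ?_ ?_
  · calc 0 ≤ rho g (r - 1) d - 1 * K := by rw [rho_sub_eq]; linarith
      _ ≤ rhoK g r d K := le_rhoK K ⟨zero_le_one, hI⟩
  · have h := four_mul_rhoK_le (K + 1) (zero_le_one.trans hI)
    rw [show r + 1 + (g - d + r) - (K + 1) = r + (g - d + r) - K by ring] at h
    linarith

theorem stmt18 (α : ℤ) (hα : 3 ≤ α) :
    kappa (2 * α ^ 2 + α - 2) (α - 1) (2 * α ^ 2 - 4) = 3 * α - 2 ∧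
    kappa (2 * α ^ 2 + α - 2) α (2 * α ^ 2 - 1) = 3 * α - 2 := by
  have hρ₁ : rho (2 * α ^ 2 + α - 2) (α - 1) (2 * α ^ 2 - 4) = -2 := by unfold rho; ring
  have hρ₂ : rho (2 * α ^ 2 + α - 2) α (2 * α ^ 2 - 1) = -1 := by unfold rho; ring
  constructor
  · exact kappa_eq_of_rho_add (by omega) (le_min (by omega) (by ring_nf; omega))
      (by rw [hρ₁]; ring_nf; rfl) (by rw [hρ₁]; ring_nf; norm_num)
  · exact kappa_eq_of_rho_add (by omega) (le_min (by omega) (by ring_nf; omega))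
      (by rw [hρ₂]; ring_nf; rfl) (by rw [hρ₂]; ring_nf; norm_num)
end
end
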